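/- For the program with rules ℓ1 : a ∨ b ← c and ℓ2 : c ← b, the interpretation {b,c} is a supported model (via the cyclic support graph with labelling {ℓ1 : b, ℓ2 : c} and edges (c,b) and (b,c)) but is not a justified model, while ∅ is the unique justified model. -/
import Mathlib


/-- A labelled rule: `label : head ← pbody ∧ ¬ nbody ∧ ¬¬ nnbody`. -/
structure LRule (At L : Type) where
  label : L
  head : Finset At
  pbody : Finset At
  nbody : Finset At
  nnbody : Finset At

variable {At L : Type}

/-- `I` satisfies the negative part of the body of `r`. -/
def satNBody (I : Set At) (r : LRule At L) : Prop :=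
  (∀ s ∈ r.nbody, s ∉ I) ∧ (∀ t ∈ r.nnbody, t ∈ I)

/-- `I` satisfies the (full) body of `r`. -/
def satBody (I : Set At) (r : LRule At L) : Prop :=
  (∀ q ∈ r.pbody, q ∈ I) ∧ satNBody I r

/-- Classical satisfaction of a rule. -/
def satRule (I : Set At) (r : LRule At L) : Prop :=
  satBody I r → ∃ p ∈ r.head, p ∈ I

/-- `I` is a classical model of the program `P`. -/
def IsModel (I : Set At) (P : Set (LRule At L)) : Prop := ∀ r ∈ P, satRule I r

/-- A labelled program has pairwise distinct labels. -/
def IsProgram (P : Set (LRule At L)) : Prop :=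
  ∀ r ∈ P, ∀ r' ∈ P, r.label = r'.label → r = r'

/-- The positive part of a rule (keeping its label). -/
def reductRule (r : LRule At L) : LRule At L :=
  { r with nbody := ∅, nnbody := ∅ }

/-- The reduct `P^I` of a set of labelled rules. -/
def reduct (P : Set (LRule At L)) (I : Set At) : Set (LRule At L) :=
  { r' | ∃ r ∈ P, satNBody I r ∧ r' = reductRule r }

/-- The rules of `P` supporting atom `p` under `I`. -/
def SupRules (I : Set At) (P : Set (LRule At L)) (p : At) : Set (LRule At L) :=
  { r | r ∈ P ∧ p ∈ r.head ∧ satBody I r }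

/-- `(E, lab)` is a support graph of `I` under `P`: vertices are the atoms of `I`,
`lab` injectively labels each atom of `I` with the label of a rule supporting it
whose positive body atoms are exactly its in-neighbours. -/
def IsSupportGraph (I : Set At) (P : Set (LRule At L))
    (E : At → At → Prop) (lab : At → L) : Prop :=
  (∀ p q, E p q → p ∈ I ∧ q ∈ I) ∧
  Set.InjOn lab I ∧
  (∀ p ∈ I, ∃ r ∈ P, r.label = lab p ∧ p ∈ r.head ∧ satBody I r ∧
    (∀ q, E q p ↔ q ∈ r.pbody))

/-- An explanation is an acyclic (well-founded) support graph. -/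
def IsExplanation (I : Set At) (P : Set (LRule At L))
    (E : At → At → Prop) (lab : At → L) : Prop :=
  IsSupportGraph I P E lab ∧ WellFounded E

/-- A supported model: a classical model admitting a support graph. -/
def IsSupportedModel (I : Set At) (P : Set (LRule At L)) : Prop :=
  IsModel I P ∧ ∃ E lab, IsSupportGraph I P E lab

/-- A justified model: a classical model admitting an explanation. -/
def IsJustifiedModel (I : Set At) (P : Set (LRule At L)) : Prop :=
  IsModel I P ∧ ∃ E lab, IsExplanation I P E lab

/-- A stable model: a minimal classical model of the reduct `P^I`. -/
def IsStableModel (I : Set At) (P : Set (LRule At L)) : Prop :=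
  IsModel I (reduct P I) ∧ ∀ J ⊆ I, IsModel J (reduct P I) → J = I

inductive A3 : Type | a | b | c
deriving DecidableEq

inductive L2 : Type | l1 | l2
deriving DecidableEq

/-- ℓ1 : a ∨ b ← c,  ℓ2 : c ← b. -/
def Pcyc : Set (LRule A3 L2) :=
  { ⟨L2.l1, {A3.a, A3.b}, {A3.c}, ∅, ∅⟩,
    ⟨L2.l2, {A3.c}, {A3.b}, ∅, ∅⟩ }

/-- The cyclic graph with edges (c,b) and (b,c). -/
def Ecyc : A3 → A3 → Prop :=
  fun x y => (x = A3.c ∧ y = A3.b) ∨ (x = A3.b ∧ y = A3.c)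

/-- The labelling ℓ1 : b, ℓ2 : c. -/
def labcyc : A3 → L2 := fun x => if x = A3.b then L2.l1 else L2.l2

lemma no2cycle {α : Type} {E : α → α → Prop} (hwf : WellFounded E)
    {x y : α} (h1 : E x y) (h2 : E y x) : False := by
  have key : ∀ z, Acc E z → ∀ w, E w z → E z w → False := by
    intro z hz
    induction hz with
    | intro z h ih => intro w hwz hzw; exact ih w hwz z hzw hwz
  exact key x (hwf.apply x) y h2 h1

theorem supported_not_justified :
    IsModel ({A3.b, A3.c} : Set A3) Pcyc ∧
    IsSupportGraph ({A3.b, A3.c} : Set A3) Pcyc Ecyc labcyc ∧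
    IsSupportedModel ({A3.b, A3.c} : Set A3) Pcyc ∧
    ¬ IsJustifiedModel ({A3.b, A3.c} : Set A3) Pcyc ∧
    IsJustifiedModel (∅ : Set A3) Pcyc ∧
    (∀ I : Set A3, IsJustifiedModel I Pcyc → I = ∅) := by
  have hmodel : IsModel ({A3.b, A3.c} : Set A3) Pcyc := by
    intro r hr
    rcases hr with h | h <;> subst h <;>
      intro _ <;> simp [satBody, satNBody] at *
  have hsg : IsSupportGraph ({A3.b, A3.c} : Set A3) Pcyc Ecyc labcyc := by
    refine ⟨?_, ?_, ?_⟩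
    · rintro p q (⟨rfl, rfl⟩ | ⟨rfl, rfl⟩) <;> simp
    · intro p hp q hq hlab
      simp [Set.mem_insert_iff] at hp hq
      rcases hp with rfl | rfl <;> rcases hq with rfl | rfl <;>
        simp_all [labcyc]
    · intro p hp
      rcases hp with rfl | hp
      · refine ⟨⟨L2.l1, {A3.a, A3.b}, {A3.c}, ∅, ∅⟩, Or.inl rfl, ?_, ?_, ?_, ?_⟩
        · simp [labcyc]
        · simp
        · constructor <;> simp [satNBody]
        · intro q; constructor
          · rintro (⟨rfl, _⟩ | ⟨_, h⟩) <;> simp_all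
          · intro hq; simp at hq; subst hq; exact Or.inl ⟨rfl, rfl⟩
      · rcases hp with rfl
        refine ⟨⟨L2.l2, {A3.c}, {A3.b}, ∅, ∅⟩, Or.inr rfl, ?_, ?_, ?_, ?_⟩
        · simp [labcyc]
        · simp
        · constructor <;> simp [satNBody]
        · intro q; constructor
          · rintro (⟨_, h⟩ | ⟨rfl, _⟩) <;> simp_all
          · intro hq; simp at hq; subst hq; exact Or.inr ⟨rfl, rfl⟩
  -- generic lemma: in any justified model I of Pcyc, I = ∅
  have huniq : ∀ I : Set A3, IsJustifiedModel I Pcyc → I = ∅ := by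
    intro I ⟨_, E, lab, ⟨⟨hEdom, hinj, hsup⟩, hwf⟩⟩
    -- if b ∈ I then c ∈ I with E c b ... leads to cycle
    have hb : ∀ p ∈ I, p ∈ ({A3.b, A3.c} : Set A3) → False := by
      intro p hpI hpbc
      -- b ∈ I → c ∈ I ∧ E c b
      have stepb : A3.b ∈ I → A3.c ∈ I ∧ E A3.c A3.b := by
        intro hbI
        obtain ⟨r, hr, _, hhead, hbody, hedge⟩ := hsup A3.b hbI
        rcases hr with rfl | rfl
        · refine ⟨hbody.1 A3.c (by simp), ?_⟩
          rw [hedge]; simp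
        · simp at hhead
      have stepc : A3.c ∈ I → A3.b ∈ I ∧ E A3.b A3.c := by
        intro hcI
        obtain ⟨r, hr, _, hhead, hbody, hedge⟩ := hsup A3.c hcI
        rcases hr with rfl | rfl
        · simp at hhead
        · refine ⟨hbody.1 A3.b (by simp), ?_⟩
          rw [hedge]; simp
      rcases hpbc with rfl | rfl
      · obtain ⟨hc, e1⟩ := stepb hpI
        obtain ⟨_, e2⟩ := stepc hc
        exact no2cycle hwf e1 e2
      · obtain ⟨hbI, e2⟩ := stepc hpI
        obtain ⟨_, e1⟩ := stepb hbI
        exact no2cycle hwf e1 e2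
    ext p
    simp only [Set.mem_empty_iff_false, iff_false]
    intro hpI
    cases p with
    | a =>
      obtain ⟨r, hr, _, hhead, hbody, _⟩ := hsup A3.a hpI
      rcases hr with rfl | rfl
      · exact hb A3.c (hbody.1 A3.c (by simp)) (by simp)
      · simp at hhead
    | b => exact hb A3.b hpI (by simp)
    | c => exact hb A3.c hpI (by simp)
  have hjemp : IsJustifiedModel (∅ : Set A3) Pcyc := by
    refine ⟨?_, fun _ _ => False, fun _ => L2.l1, ⟨?_, ?_, ?_⟩, ?_⟩
    · intro r hr hbody
      rcases hr with rfl | rfl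
      · exact absurd (hbody.1 A3.c (by simp)) (by simp)
      · exact absurd (hbody.1 A3.b (by simp)) (by simp)
    · intro p q h; exact h.elim
    · intro p hp; exact hp.elim
    · intro p hp; exact hp.elim
    · constructor; intro x; constructor; intro y h; exact h.elim
  exact ⟨hmodel, hsg, ⟨hmodel, _, _, hsg⟩, fun hj => by
    have := huniq _ hj
    simp [Set.eq_empty_iff_forall_notMem] at this
    exact (this A3.b).1 rfl, hjemp, huniq⟩
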